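/- Let $a_{mn}, b_{mn}$ be two sequences of random variables with $a_{mn} + b_{mn} = O_p(m^{-1})$ and $a_{mn} = O_p(m^{-1/2})$, $b_{mn} = O_p(m^{-1/2})$. Then $\max(a_{mn}^2, b_{mn}^2) = a_{mn}^2 + O_p(m^{-3/2})$ and $|a_{mn}| = |b_{mn}| + O_p(m^{-1})$; in particular $\max(a_{mn}^2, b_{mn}^2)$ and $a_{mn}^2$ differ by $o_p(m^{-1})$. -/
import Mathlib


open MeasureTheory

/-- `X k = O_p(r k)`: boundedness in probability at rate `r`. -/
def IsBigOp {Ω : Type*} [MeasurableSpace Ω] (μ : Measure Ω)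
    (X : ℕ → Ω → ℝ) (r : ℕ → ℝ) : Prop :=
  ∀ ε : ℝ, 0 < ε → ∃ M : ℝ, 0 < M ∧ ∀ k, (μ {ω | M * |r k| < |X k ω|}).toReal ≤ ε

/-- `X k = o_p(r k)`: convergence to zero in probability at rate `r`. -/
def IsLittleOp {Ω : Type*} [MeasurableSpace Ω] (μ : Measure Ω)
    (X : ℕ → Ω → ℝ) (r : ℕ → ℝ) : Prop :=
  ∀ δ : ℝ, 0 < δ →
    Filter.Tendsto (fun k => (μ {ω | δ * |r k| < |X k ω|}).toReal) Filter.atTop (nhds 0)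

lemma toReal_union_le' {Ω : Type*} [MeasurableSpace Ω] (μ : Measure Ω) [IsFiniteMeasure μ]
    (A B : Set Ω) : (μ (A ∪ B)).toReal ≤ (μ A).toReal + (μ B).toReal := by
  rw [← ENNReal.toReal_add (measure_ne_top μ A) (measure_ne_top μ B)]
  exact ENNReal.toReal_mono
    (ENNReal.add_ne_top.2 ⟨measure_ne_top _ _, measure_ne_top _ _⟩) (measure_union_le A B)

lemma bigOp_mono' {Ω : Type*} [MeasurableSpace Ω] (μ : Measure Ω) [IsFiniteMeasure μ]
    {X Y : ℕ → Ω → ℝ} {r s : ℕ → ℝ}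
    (h : ∀ k ω, |X k ω| ≤ |Y k ω|) (hr : ∀ k, |r k| = |s k|)
    (hY : IsBigOp μ Y s) : IsBigOp μ X r := by
  intro ε hε
  obtain ⟨M, hM, hle⟩ := hY ε hε
  refine ⟨M, hM, fun k => ?_⟩
  refine le_trans (ENNReal.toReal_mono (measure_ne_top _ _) (measure_mono ?_)) (hle k)
  intro ω hω
  simp only [Set.mem_setOf_eq] at *
  calc M * |s k| = M * |r k| := by rw [hr]
  _ < |X k ω| := hω
  _ ≤ |Y k ω| := h k ω

lemma bigOp_add' {Ω : Type*} [MeasurableSpace Ω] (μ : Measure Ω) [IsFiniteMeasure μ]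
    {X Y : ℕ → Ω → ℝ} {r : ℕ → ℝ}
    (hX : IsBigOp μ X r) (hY : IsBigOp μ Y r) :
    IsBigOp μ (fun k ω => X k ω + Y k ω) r := by
  intro ε hε
  obtain ⟨M1, hM1, h1⟩ := hX (ε/2) (by linarith)
  obtain ⟨M2, hM2, h2⟩ := hY (ε/2) (by linarith)
  refine ⟨M1 + M2, by linarith, fun k => ?_⟩
  have hsub : {ω | (M1+M2) * |r k| < |X k ω + Y k ω|} ⊆
      {ω | M1 * |r k| < |X k ω|} ∪ {ω | M2 * |r k| < |Y k ω|} := by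
    intro ω hω
    by_contra hc
    simp only [Set.mem_union, Set.mem_setOf_eq, not_or, not_lt] at hc
    simp only [Set.mem_setOf_eq] at hω
    have habs := abs_add_le (X k ω) (Y k ω)
    nlinarith [hc.1, hc.2]
  calc (μ {ω | (M1+M2) * |r k| < |X k ω + Y k ω|}).toReal
      ≤ (μ ({ω | M1 * |r k| < |X k ω|} ∪ {ω | M2 * |r k| < |Y k ω|})).toReal :=
        ENNReal.toReal_mono (measure_ne_top _ _) (measure_mono hsub)
    _ ≤ (μ {ω | M1 * |r k| < |X k ω|}).toReal + (μ {ω | M2 * |r k| < |Y k ω|}).toReal :=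
        toReal_union_le' μ _ _
    _ ≤ ε/2 + ε/2 := add_le_add (h1 k) (h2 k)
    _ = ε := by ring

lemma bigOp_mul' {Ω : Type*} [MeasurableSpace Ω] (μ : Measure Ω) [IsFiniteMeasure μ]
    {X Y : ℕ → Ω → ℝ} {r s : ℕ → ℝ}
    (hX : IsBigOp μ X r) (hY : IsBigOp μ Y s) :
    IsBigOp μ (fun k ω => X k ω * Y k ω) (fun k => r k * s k) := by
  intro ε hε
  obtain ⟨M1, hM1, h1⟩ := hX (ε/2) (by linarith)
  obtain ⟨M2, hM2, h2⟩ := hY (ε/2) (by linarith)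
  refine ⟨M1 * M2, mul_pos hM1 hM2, fun k => ?_⟩
  have hsub : {ω | (M1*M2) * |r k * s k| < |X k ω * Y k ω|} ⊆
      {ω | M1 * |r k| < |X k ω|} ∪ {ω | M2 * |s k| < |Y k ω|} := by
    intro ω hω
    by_contra hc
    simp only [Set.mem_union, Set.mem_setOf_eq, not_or, not_lt] at hc
    simp only [Set.mem_setOf_eq] at hω
    rw [abs_mul, abs_mul] at hω
    have : |X k ω| * |Y k ω| ≤ (M1 * |r k|) * (M2 * |s k|) :=
      mul_le_mul hc.1 hc.2 (abs_nonneg _) (le_trans (abs_nonneg _) hc.1)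
    nlinarith
  calc (μ {ω | (M1*M2) * |r k * s k| < |X k ω * Y k ω|}).toReal
      ≤ (μ ({ω | M1 * |r k| < |X k ω|} ∪ {ω | M2 * |s k| < |Y k ω|})).toReal :=
        ENNReal.toReal_mono (measure_ne_top _ _) (measure_mono hsub)
    _ ≤ (μ {ω | M1 * |r k| < |X k ω|}).toReal + (μ {ω | M2 * |s k| < |Y k ω|}).toReal :=
        toReal_union_le' μ _ _
    _ ≤ ε/2 + ε/2 := add_le_add (h1 k) (h2 k)
    _ = ε := by ring

lemma rate_eq' : ∀ k : ℕ, |(k : ℝ) ^ (-(3 : ℝ) / 2)| = |((k : ℝ))⁻¹ * (k : ℝ) ^ (-(1 : ℝ) / 2)| := by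
  intro k
  rcases Nat.eq_zero_or_pos k with hk | hk
  · subst hk; simp [Real.zero_rpow (by norm_num : (-(3:ℝ)/2) ≠ 0),
      Real.zero_rpow (by norm_num : (-(1:ℝ)/2) ≠ 0)]
  · have h0 : (0:ℝ) < (k:ℝ) := by exact_mod_cast hk
    have : ((k:ℝ))⁻¹ * (k:ℝ) ^ (-(1:ℝ)/2) = (k:ℝ) ^ (-(3:ℝ)/2) := by
      rw [← Real.rpow_neg_one, ← Real.rpow_add h0]; norm_num
    rw [this]

lemma ptwise_max' (x y : ℝ) : |max (x^2) (y^2) - x^2| ≤ |(x + y) * (|x| + |y|)| := by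
  have h1 : |max (x^2) (y^2) - x^2| ≤ |y^2 - x^2| := by
    rcases le_total (x^2) (y^2) with h | h
    · rw [max_eq_right h, abs_of_nonneg (sub_nonneg.2 h)]
    · rw [max_eq_left h]; simp [abs_nonneg]
  have h2 : |y^2 - x^2| = |x + y| * |y - x| := by
    rw [← abs_mul]; congr 1; ring
  have h3 : |y - x| ≤ |x| + |y| := by
    calc |y - x| ≤ |y| + |x| := abs_sub y x
    _ = |x| + |y| := by ring
  calc |max (x^2) (y^2) - x^2| ≤ |x + y| * |y - x| := h2 ▸ h1
    _ ≤ |x + y| * (|x| + |y|) := mul_le_mul_of_nonneg_left h3 (abs_nonneg _)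
    _ = |(x + y) * (|x| + |y|)| := by
        rw [abs_mul, abs_of_nonneg (add_nonneg (abs_nonneg x) (abs_nonneg y))]

/-- If `a + b = O_p(m⁻¹)` and `a, b = O_p(m^{-1/2})`, then
`max(a², b²) = a² + O_p(m^{-3/2})`, `|a| = |b| + O_p(m⁻¹)`, and in particular
`max(a², b²) - a² = o_p(m⁻¹)`. -/
theorem stmt18 {Ω : Type*} [MeasurableSpace Ω] (μ : Measure Ω) [IsProbabilityMeasure μ]
    (a b : ℕ → Ω → ℝ)
    (hmeasa : ∀ k, Measurable (a k)) (hmeasb : ∀ k, Measurable (b k))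
    (hab : IsBigOp μ (fun k ω => a k ω + b k ω) (fun k => ((k : ℝ))⁻¹))
    (ha : IsBigOp μ a (fun k => (k : ℝ) ^ (-(1 : ℝ) / 2)))
    (hb : IsBigOp μ b (fun k => (k : ℝ) ^ (-(1 : ℝ) / 2))) :
    IsBigOp μ (fun k ω => max ((a k ω) ^ 2) ((b k ω) ^ 2) - (a k ω) ^ 2)
        (fun k => (k : ℝ) ^ (-(3 : ℝ) / 2)) ∧
    IsBigOp μ (fun k ω => |a k ω| - |b k ω|) (fun k => ((k : ℝ))⁻¹) ∧
    IsLittleOp μ (fun k ω => max ((a k ω) ^ 2) ((b k ω) ^ 2) - (a k ω) ^ 2)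
        (fun k => ((k : ℝ))⁻¹) := by
  -- |a| and |b| are O_p(k^{-1/2})
  have haa : IsBigOp μ (fun k ω => |a k ω|) (fun k => (k : ℝ) ^ (-(1 : ℝ) / 2)) :=
    bigOp_mono' μ (fun k ω => by rw [abs_abs]) (fun k => rfl) ha
  have hbb : IsBigOp μ (fun k ω => |b k ω|) (fun k => (k : ℝ) ^ (-(1 : ℝ) / 2)) :=
    bigOp_mono' μ (fun k ω => by rw [abs_abs]) (fun k => rfl) hb
  have hsum : IsBigOp μ (fun k ω => |a k ω| + |b k ω|) (fun k => (k : ℝ) ^ (-(1 : ℝ) / 2)) :=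
    bigOp_add' μ haa hbb
  have hprod : IsBigOp μ (fun k ω => (a k ω + b k ω) * (|a k ω| + |b k ω|))
      (fun k => ((k : ℝ))⁻¹ * (k : ℝ) ^ (-(1 : ℝ) / 2)) := bigOp_mul' μ hab hsum
  have part1 : IsBigOp μ (fun k ω => max ((a k ω) ^ 2) ((b k ω) ^ 2) - (a k ω) ^ 2)
      (fun k => (k : ℝ) ^ (-(3 : ℝ) / 2)) :=
    bigOp_mono' μ (fun k ω => ptwise_max' (a k ω) (b k ω)) rate_eq' hprod
  have part2 : IsBigOp μ (fun k ω => |a k ω| - |b k ω|) (fun k => ((k : ℝ))⁻¹) := by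
    refine bigOp_mono' μ (fun k ω => ?_) (fun k => rfl) hab
    calc |(|a k ω| - |b k ω|)| = |(|a k ω| - |(-(b k ω))|)| := by rw [abs_neg]
      _ ≤ |a k ω - (-(b k ω))| := abs_abs_sub_abs_le_abs_sub _ _
      _ = |a k ω + b k ω| := by rw [sub_neg_eq_add]
  refine ⟨part1, part2, ?_⟩
  -- little-o: from part1
  intro δ hδ
  rw [tendsto_order]
  constructor
  · intro x hx
    exact Filter.Eventually.of_forall fun k => lt_of_lt_of_le hx ENNReal.toReal_nonneg
  · intro x hx
    obtain ⟨M, hM, hle⟩ := part1 (x/2) (by linarith)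
    filter_upwards [Filter.eventually_ge_atTop (⌈(M/δ)^2⌉₊ + 1)] with k hk
    have hk1 : 1 ≤ k := le_trans (Nat.le_add_left 1 _) hk
    have h0 : (0:ℝ) < (k:ℝ) := by exact_mod_cast hk1
    have hkr : ((M/δ)^2 : ℝ) ≤ (k:ℝ) := by
      calc ((M/δ)^2 : ℝ) ≤ (⌈(M/δ)^2⌉₊ : ℝ) := Nat.le_ceil _
        _ ≤ (k : ℝ) := by exact_mod_cast le_trans (Nat.le_succ _) hk
    set t : ℝ := (k:ℝ) ^ (-(1:ℝ)/2) with ht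
    have htpos : 0 < t := Real.rpow_pos_of_pos h0 _
    have ht2 : t ^ 2 = ((k:ℝ))⁻¹ := by
      rw [ht, ← Real.rpow_natCast ((k:ℝ) ^ (-(1:ℝ)/2)) 2, ← Real.rpow_mul h0.le]
      norm_num [Real.rpow_neg_one]
    have hδM : (0:ℝ) < δ / M := div_pos hδ hM
    have hMδpos : (0:ℝ) < (M/δ)^2 := pow_pos (div_pos hM hδ) 2
    have hinv : ((k:ℝ))⁻¹ ≤ (δ/M)^2 := by
      have : ((k:ℝ))⁻¹ ≤ ((M/δ)^2)⁻¹ := by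
        apply inv_anti₀ hMδpos hkr
      calc ((k:ℝ))⁻¹ ≤ ((M/δ)^2)⁻¹ := this
        _ = (δ/M)^2 := by field_simp
    have htle : t ≤ δ / M := by
      nlinarith [sq_nonneg (t - δ/M), sq_nonneg (t + δ/M)]
    have hrate : M * |(k:ℝ) ^ (-(3:ℝ)/2)| ≤ δ * |((k:ℝ))⁻¹| := by
      have hsplit : (k:ℝ) ^ (-(3:ℝ)/2) = ((k:ℝ))⁻¹ * t := by
        rw [ht, ← Real.rpow_neg_one (k:ℝ), ← Real.rpow_add h0]; norm_num
      have hinvnn : (0:ℝ) ≤ ((k:ℝ))⁻¹ := inv_nonneg.2 h0.le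
      rw [hsplit, abs_of_nonneg (mul_nonneg hinvnn htpos.le), abs_of_nonneg hinvnn]
      have : M * t ≤ δ := by
        have := mul_le_mul_of_nonneg_left htle hM.le
        calc M * t ≤ M * (δ / M) := this
          _ = δ := by field_simp
      nlinarith
    have hsub : {ω | δ * |((k:ℝ))⁻¹| < |max ((a k ω)^2) ((b k ω)^2) - (a k ω)^2|} ⊆
        {ω | M * |(k:ℝ) ^ (-(3:ℝ)/2)| < |max ((a k ω)^2) ((b k ω)^2) - (a k ω)^2|} := by
      intro ω hω
      simp only [Set.mem_setOf_eq] at *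
      exact lt_of_le_of_lt hrate hω
    calc (μ {ω | δ * |((k:ℝ))⁻¹| < |max ((a k ω)^2) ((b k ω)^2) - (a k ω)^2|}).toReal
        ≤ (μ {ω | M * |(k:ℝ) ^ (-(3:ℝ)/2)| < |max ((a k ω)^2) ((b k ω)^2) - (a k ω)^2|}).toReal :=
          ENNReal.toReal_mono (measure_ne_top _ _) (measure_mono hsub)
      _ ≤ x/2 := hle k
      _ < x := by linarith
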